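/- arXiv:1207.0289 — 2 statements merged into one kernel-verified Lean document; each statement's English description precedes it below -/
import Mathlib

section
/- Every NIP theory is resilient: if (a_i)_{i∈ℚ} and (b_j)_{j∈ℚ} are indiscernible sequences with a₀ = b₀, (b_j) indiscernible over (a_i)_{i≠0}, and {φ(x,a_i)}_{i∈ℚ} consistent, then {φ(x,b_j)}_{j∈ℚ} is consistent. -/
open FirstOrder FirstOrder.Language

namespace Paper

variable {L : Language} {M : Type*} [L.Structure M]

/-- `a` is an indiscernible sequence of `α`-tuples over the parameter set `B`. -/
def IndiscSeqOver (B : Set M) {ι : Type*} [LinearOrder ι] {α : Type*}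
    (a : ι → α → M) : Prop :=
  ∀ (n m : ℕ) (φ : L.Formula ((Fin n × α) ⊕ Fin m)) (b : Fin m → M),
    (∀ k, b k ∈ B) →
    ∀ (i j : Fin n → ι), StrictMono i → StrictMono j →
      (φ.Realize (Sum.elim (fun p => a (i p.1) p.2) b) ↔
        φ.Realize (Sum.elim (fun p => a (j p.1) p.2) b))

/-- `a` is an indiscernible array over `B`: the type over `B` of a finite sub-array
depends only on the order types of the row- and column-index sets. -/
def IndiscArrayOver (B : Set M) {α : Type*} (a : ℕ → ℕ → α → M) : Prop :=
  ∀ (n m : ℕ) (φ : L.Formula ((Fin n × Fin n × α) ⊕ Fin m)) (b : Fin m → M),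
    (∀ k, b k ∈ B) →
    ∀ (i i' j j' : Fin n → ℕ), StrictMono i → StrictMono i' → StrictMono j → StrictMono j' →
      (φ.Realize (Sum.elim (fun p => a (i p.1) (j p.2.1) p.2.2) b) ↔
        φ.Realize (Sum.elim (fun p => a (i' p.1) (j' p.2.1) p.2.2) b))

/-- A strongly indiscernible array over `B`: an indiscernible array whose rows are
mutually indiscernible over `B`. -/
def StronglyIndiscArrayOver (B : Set M) {α : Type*} (a : ℕ → ℕ → α → M) : Prop :=
  IndiscArrayOver (L := L) B a ∧
    ∀ i₀ : ℕ, IndiscSeqOver (L := L) (B ∪ {x | ∃ i j t, i ≠ i₀ ∧ a i j t = x}) (a i₀)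

/-- The family `{φ(x, c i)}_{i ∈ s}` is inconsistent for every `k`-element set `s`. -/
def KInconsistent (k : ℕ) {β α : Type*} (φ : L.Formula (β ⊕ α)) (c : ℕ → α → M) : Prop :=
  ∀ s : Finset ℕ, s.card = k → ¬∃ x : β → M, ∀ i ∈ s, φ.Realize (Sum.elim x (c i))

/-- The formula `φ(x, y)` has the tree property of the second kind. -/
def HasTP2 {β α : Type*} (φ : L.Formula (β ⊕ α)) : Prop :=
  ∃ (a : ℕ → ℕ → α → M) (k : ℕ),
    (∀ i, KInconsistent k φ (a i)) ∧
      ∀ f : ℕ → ℕ, ∃ x : β → M, ∀ i, φ.Realize (Sum.elim x (a i (f i)))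

/-- The theory (of the monster model `M`) is NTP₂: no formula has TP₂. -/
def NTP2 (L : Language) (M : Type*) [L.Structure M] : Prop :=
  ∀ (n m : ℕ) (φ : L.Formula (Fin n ⊕ Fin m)), ¬HasTP2 (M := M) φ

/-- `φ(x, a)` divides over `A`. -/
def Divides {β α : Type*} (φ : L.Formula (β ⊕ α)) (a : α → M) (A : Set M) : Prop :=
  ∃ c : ℕ → α → M, IndiscSeqOver (L := L) A c ∧ c 0 = a ∧
    ¬∃ x : β → M, ∀ i, φ.Realize (Sum.elim x (c i))

/-- `φ(x, a)` array-divides over `A`. -/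
def ArrayDivides {β α : Type*} (φ : L.Formula (β ⊕ α)) (a : α → M) (A : Set M) : Prop :=
  ∃ c : ℕ → ℕ → α → M, IndiscArrayOver (L := L) A c ∧ c 0 0 = a ∧
    ¬∃ x : β → M, ∀ i j, φ.Realize (Sum.elim x (c i j))

/-- `φ(x, a)` forks over `A`: it implies a finite disjunction of formulas, each
dividing over `A`. -/
def Forks {β α : Type*} (φ : L.Formula (β ⊕ α)) (a : α → M) (A : Set M) : Prop :=
  ∃ (k : ℕ) (m : Fin k → ℕ) (ψ : ∀ i, L.Formula (β ⊕ Fin (m i))) (c : ∀ i, Fin (m i) → M),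
    (∀ i, Divides (ψ i) (c i) A) ∧
      ∀ x : β → M, φ.Realize (Sum.elim x a) → ∃ i, (ψ i).Realize (Sum.elim x (c i))

/-- The partial type `{φ(x, c i)}_{i ∈ ω}` forks over `A`. -/
def FamForks {β α : Type*} (φ : L.Formula (β ⊕ α)) (c : ℕ → α → M) (A : Set M) : Prop :=
  ∃ (k : ℕ) (m : Fin k → ℕ) (ψ : ∀ i, L.Formula (β ⊕ Fin (m i))) (d : ∀ i, Fin (m i) → M),
    (∀ i, Divides (ψ i) (d i) A) ∧
      ∀ x : β → M, (∀ i, φ.Realize (Sum.elim x (c i))) → ∃ i, (ψ i).Realize (Sum.elim x (d i))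

/-- The complete type `tp(d / C)` forks over `A`: some formula over `C` realized by
`d` forks over `A`. -/
def TypeForksOver {β : Type*} (d : β → M) (C A : Set M) : Prop :=
  ∃ (m : ℕ) (φ : L.Formula (β ⊕ Fin m)) (c : Fin m → M),
    (∀ k, c k ∈ C) ∧ φ.Realize (Sum.elim d c) ∧ Forks φ c A

/-- `C` is an extension base: no type over `C` forks over `C`. -/
def IsExtensionBase (C : Set M) : Prop :=
  ∀ (n : ℕ) (d : Fin n → M), ¬TypeForksOver (L := L) d C C

/-- `d ⫝_A b` : `tp(d / A b)` does not fork over `A`. -/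
def IndepOver (A : Set M) {β γ : Type*} (d : β → M) (b : γ → M) : Prop :=
  ¬TypeForksOver (L := L) d (A ∪ Set.range b) A

/-- `d` and `e` have the same type over `A`. -/
def EqTpOver (A : Set M) {α : Type*} (d e : α → M) : Prop :=
  ∀ (m : ℕ) (φ : L.Formula (α ⊕ Fin m)) (c : Fin m → M), (∀ k, c k ∈ A) →
    (φ.Realize (Sum.elim d c) ↔ φ.Realize (Sum.elim e c))

/-- `b, b'` start an `A`-indiscernible sequence. -/
def StartIndisc (A : Set M) {α : Type*} (b b' : α → M) : Prop :=
  ∃ c : ℕ → α → M, IndiscSeqOver (L := L) A c ∧ c 0 = b ∧ c 1 = b'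

/-- The Lascar distance of `b, b'` over `A` is at most `n`. -/
def LascarDistLE (A : Set M) {α : Type*} (b b' : α → M) (n : ℕ) : Prop :=
  ∃ c : Fin (n + 1) → α → M, c 0 = b ∧ c (Fin.last n) = b' ∧
    ∀ i : Fin n, StartIndisc (L := L) A (c i.castSucc) (c i.succ)

/-- `b ≡ᴸ_A b'` : equality of Lascar strong types over `A`. -/
def LascarEq (A : Set M) {α : Type*} (b b' : α → M) : Prop :=
  ∃ n : ℕ, LascarDistLE (L := L) A b b' n

/-- A Morley sequence over `A`: `A`-indiscernible and `tp(c_i / A c_{<i})` does not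
fork over `A`. -/
def IsMorleySeqOver (A : Set M) {α : Type*} (c : ℕ → α → M) : Prop :=
  IndiscSeqOver (L := L) A c ∧
    ∀ i : ℕ, ¬TypeForksOver (L := L) (c i) (A ∪ {x | ∃ j t, j < i ∧ c j t = x}) A

/-- `b, b'` start a Morley sequence over `A`. -/
def StartMorley (A : Set M) {α : Type*} (b b' : α → M) : Prop :=
  ∃ c : ℕ → α → M, IsMorleySeqOver (L := L) A c ∧ c 0 = b ∧ c 1 = b'

/-- `≡′_A` : the equivalence relation generated by "starting a common Morley
sequence over `A` in either order". -/
def EqPrimeOver (A : Set M) {α : Type*} (b b' : α → M) : Prop :=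
  Relation.EqvGen (fun x y => StartMorley (L := L) A x y ∨ StartMorley (L := L) A y x) b b'


/-- `T` is NIP: every formula has finite alternation rank. -/
def IsNIP (L : Language) (M : Type*) [L.Structure M] : Prop :=
  ∀ (n m : ℕ) (φ : L.Formula (Fin n ⊕ Fin m)), ∃ k : ℕ,
    ∀ (c : ℕ → Fin m → M), IndiscSeqOver (L := L) (∅ : Set M) c →
      ∀ d : Fin n → M, ¬∀ i, i < 2 * k → (φ.Realize (Sum.elim d (c i)) ↔ Even i)

/-!
If `{φ(x, b_j)}` were inconsistent, every finite sign pattern of `φ` would be realized along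
`(a_i)`, by induction on the number of negative slots. Given `x` realizing a pattern whose
slot at position `0` is positive, pick `j` with `¬φ(x, b_j)`: the pattern with that slot
negated is realized with `b_j` in it. This is a property of `b_j` over `(a_i)_{i ≠ 0}`, so it
also holds of `b_0 = a_0`, and indiscernibility of `(a_i)` moves the positions anywhere.
The alternating pattern of length `2k` then contradicts NIP.
-/

def PatternRealized {β α ι : Type*} (φ : L.Formula (β ⊕ α)) (c : ι → α → M) (P : ι → Prop) :
    Prop :=
  ∃ x : β → M, ∀ t, φ.Realize (Sum.elim x (c t)) ↔ P t

theorem exists_formula_realize_iff_patternRealized {β α ι : Type*} [Finite β] [Finite ι]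
    (φ : L.Formula (β ⊕ α)) (P : ι → Prop) :
    ∃ ψ : L.Formula (ι × α), ∀ c : ι → α → M,
      ψ.Realize (fun p => c p.1 p.2) ↔ PatternRealized φ c P := by
  classical
  refine ⟨Formula.iExs β <| Formula.iInf fun t =>
    (φ.relabel (Sum.elim Sum.inr fun u => Sum.inl (t, u))).iff (if P t then ⊤ else ⊥),
    fun c => ?_⟩
  rw [Formula.realize_iExs]
  refine exists_congr fun x => ?_
  rw [Formula.realize_iInf]
  refine forall_congr' fun t => ?_
  have hv : Sum.elim (fun p : ι × α => c p.1 p.2) x ∘ Sum.elim Sum.inr (fun u => Sum.inl (t, u))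
      = Sum.elim x (c t) := by
    ext (_ | _) <;> rfl
  by_cases hP : P t <;> simp [hP, hv]

namespace IndiscSeqOver

variable {B : Set M} {ι α : Type*} [LinearOrder ι] {c : ι → α → M}

theorem comp_strictMono (h : IndiscSeqOver (L := L) B c) {κ : Type*} [LinearOrder κ] {f : κ → ι}
    (hf : StrictMono f) : IndiscSeqOver (L := L) B (c ∘ f) :=
  fun _ _ ψ e he _ _ hi hj => h _ _ ψ e he _ _ (hf.comp hi) (hf.comp hj)

theorem realize_iff_of_strictMono (h : IndiscSeqOver (L := L) B c) {N : ℕ}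
    (ψ : L.Formula (Fin N × α)) {i j : Fin N → ι} (hi : StrictMono i) (hj : StrictMono j) :
    ψ.Realize (fun p => c (i p.1) p.2) ↔ ψ.Realize (fun p => c (j p.1) p.2) := by
  simpa using h N 0 (ψ.relabel Sum.inl) finZeroElim finZeroElim i j hi hj

theorem realize_iff_of_forall_mem (h : IndiscSeqOver (L := L) B c) {γ : Type*} [Finite γ]
    (ψ : L.Formula (α ⊕ γ)) {e : γ → M} (he : ∀ g, e g ∈ B) (i j : ι) :
    ψ.Realize (Sum.elim (c i) e) ↔ ψ.Realize (Sum.elim (c j) e) := by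
  let σ := Finite.equivFin γ
  have key := h 1 _ (ψ.relabel (Sum.map (fun u => ((0 : Fin 1), u)) σ)) (e ∘ σ.symm)
    (fun _ => he _) (fun _ => i) (fun _ => j) (Subsingleton.strictMono _)
    (Subsingleton.strictMono _)
  simp only [Formula.realize_relabel] at key
  convert key using 2 <;> ext (_ | _) <;> simp

theorem patternRealized_comp_iff {β : Type*} [Finite β] (h : IndiscSeqOver (L := L) B c)
    (φ : L.Formula (β ⊕ α)) {N : ℕ} (P : Fin N → Prop) {i j : Fin N → ι} (hi : StrictMono i)
    (hj : StrictMono j) :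
    PatternRealized φ (c ∘ i) P ↔ PatternRealized φ (c ∘ j) P := by
  obtain ⟨ψ, hψ⟩ := exists_formula_realize_iff_patternRealized (M := M) φ P
  rw [← hψ, ← hψ]
  exact h.realize_iff_of_strictMono ψ hi hj

theorem patternRealized_update_iff {β : Type*} [Finite β] [Finite α]
    (h : IndiscSeqOver (L := L) B c) (φ : L.Formula (β ⊕ α)) {κ : Type*} [Finite κ]
    [DecidableEq κ] (P : κ → Prop)
    {d : κ → α → M} {t₀ : κ} (hd : ∀ t ≠ t₀, ∀ u, d t u ∈ B) (i j : ι) :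
    PatternRealized φ (Function.update d t₀ (c i)) P ↔
      PatternRealized φ (Function.update d t₀ (c j)) P := by
  obtain ⟨ψ, hψ⟩ := exists_formula_realize_iff_patternRealized (M := M) φ P
  let g : κ × α → α ⊕ ({t // t ≠ t₀} × α) := fun p =>
    if ht : p.1 = t₀ then Sum.inl p.2 else Sum.inr (⟨p.1, ht⟩, p.2)
  have hg (y : α → M) : Sum.elim y (fun p => d p.1 p.2) ∘ g =
      fun p => Function.update d t₀ y p.1 p.2 := by
    ext ⟨t, u⟩
    by_cases ht : t = t₀
    · subst ht
      simp [g]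
    · simp [g, ht]
  have key := h.realize_iff_of_forall_mem (ψ.relabel g) (fun p => hd p.1 p.1.2 p.2) i j
  rwa [Formula.realize_relabel, Formula.realize_relabel, hg, hg, hψ, hψ] at key

end IndiscSeqOver

section Resilience

variable {α β : Type*} [Finite α] [Finite β] {φ : L.Formula (β ⊕ α)} {a b : ℚ → α → M}

theorem patternRealized_insert_of_inconsistent (hab : a 0 = b 0)
    (hbo : IndiscSeqOver (L := L) {x | ∃ i t, i ≠ 0 ∧ a i t = x} b)
    (hincons : ∀ x : β → M, ∃ j, ¬φ.Realize (Sum.elim x (b j)))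
    {N : ℕ} {q : Fin N → ℚ} (hq : Function.Injective q) {t₀ : Fin N} (h0 : q t₀ = 0)
    {S : Finset (Fin N)} (ht₀ : t₀ ∉ S) (hS : PatternRealized φ (a ∘ q) (· ∉ S)) :
    PatternRealized φ (a ∘ q) (· ∉ insert t₀ S) := by
  obtain ⟨x, hx⟩ := hS
  obtain ⟨j, hj⟩ := hincons x
  have hupd : Function.update (a ∘ q) t₀ (b 0) = a ∘ q := by
    rw [← hab, ← h0]
    exact Function.update_eq_self _ _
  have hparams : ∀ t ≠ t₀, ∀ u, (a ∘ q) t u ∈ {x | ∃ i t, i ≠ 0 ∧ a i t = x} :=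
    fun t ht u => ⟨q t, u, h0 ▸ hq.ne ht, rfl⟩
  rw [← hupd, ← hbo.patternRealized_update_iff φ _ hparams j 0]
  refine ⟨x, fun t => ?_⟩
  by_cases ht : t = t₀
  · subst ht
    simpa using hj
  · simpa [Function.update_of_ne ht, ht] using hx t

theorem patternRealized_of_inconsistent {B : Set M} (ha : IndiscSeqOver (L := L) B a)
    (hab : a 0 = b 0) (hbo : IndiscSeqOver (L := L) {x | ∃ i t, i ≠ 0 ∧ a i t = x} b)
    (hincons : ∀ x : β → M, ∃ j, ¬φ.Realize (Sum.elim x (b j)))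
    (hcons : ∃ x : β → M, ∀ i, φ.Realize (Sum.elim x (a i)))
    {N : ℕ} (S : Finset (Fin N)) {q : Fin N → ℚ} (hq : StrictMono q) :
    PatternRealized φ (a ∘ q) (· ∉ S) := by
  induction S using Finset.induction_on generalizing q with
  | empty =>
    obtain ⟨x, hx⟩ := hcons
    exact ⟨x, fun t => by simpa using hx (q t)⟩
  | insert t₀ S ht₀ ih =>
    let q' : Fin N → ℚ := fun t => (t : ℚ) - t₀
    have hq' : StrictMono q' := fun s t hst => sub_lt_sub_right (by exact_mod_cast hst) _
    refine (ha.patternRealized_comp_iff φ _ hq' hq).1 ?_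
    exact patternRealized_insert_of_inconsistent hab hbo hincons hq'.injective (sub_self _) ht₀
      (ih hq')

end Resilience

theorem resilient_of_NIP_general (hNIP : IsNIP L M) {n m : ℕ} (φ : L.Formula (Fin n ⊕ Fin m))
    (a b : ℚ → Fin m → M)
    (ha : IndiscSeqOver (L := L) (∅ : Set M) a)
    (hab : a 0 = b 0)
    (hbo : IndiscSeqOver (L := L) {x | ∃ i t, i ≠ 0 ∧ a i t = x} b)
    (hcons : ∃ x : Fin n → M, ∀ i, φ.Realize (Sum.elim x (a i))) :
    ∃ x : Fin n → M, ∀ j, φ.Realize (Sum.elim x (b j)) := by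
  by_contra! hincons
  obtain ⟨k, hk⟩ := hNIP n m φ
  obtain ⟨x, hx⟩ := patternRealized_of_inconsistent ha hab hbo hincons hcons
    (Finset.univ.filter fun t : Fin (2 * k) => ¬Even (t : ℕ))
    (Nat.strictMono_cast.comp Fin.val_strictMono)
  refine hk (fun i : ℕ => a i) (ha.comp_strictMono Nat.strictMono_cast) x fun i hi => ?_
  simpa using hx ⟨i, hi⟩

/-- every NIP theory is resilient. -/
theorem resilient_of_NIP (hNIP : IsNIP L M) {n m : ℕ} (φ : L.Formula (Fin n ⊕ Fin m))
    (a b : ℚ → Fin m → M)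
    (ha : IndiscSeqOver (L := L) (∅ : Set M) a)
    (hb : IndiscSeqOver (L := L) (∅ : Set M) b)
    (hab : a 0 = b 0)
    (hbo : IndiscSeqOver (L := L) {x | ∃ i t, i ≠ 0 ∧ a i t = x} b)
    (hcons : ∃ x : Fin n → M, ∀ i, φ.Realize (Sum.elim x (a i))) :
    ∃ x : Fin n → M, ∀ j, φ.Realize (Sum.elim x (b j)) :=
  resilient_of_NIP_general hNIP φ a b ha hab hbo hcons

end Paper
end

section
/- T is strong² if and only if T is strong³; i.e., if there is an inp³-pattern of infinite depth (parameters b_i allowed from any other rows), then there is an inp²-pattern of infinite depth (parameters b_i only from earlier rows). -/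
open FirstOrder FirstOrder.Language

namespace Paper

variable {L : Language} {M : Type*} [L.Structure M]

/-- There is an inp²-pattern of infinite depth in the variables `Fin n` :
parameters `b_i` come from earlier rows only. -/
def Inp2PatternInf (L : Language) (M : Type*) [L.Structure M] (n : ℕ) : Prop :=
  ∃ (r s : ℕ → ℕ) (φ : ∀ i : ℕ, L.Formula (Fin n ⊕ (Fin (r i) ⊕ Fin (s i))))
    (a : ∀ i : ℕ, ℕ → Fin (r i) → M) (b : ∀ i : ℕ, Fin (s i) → M),
    (∀ i₀ : ℕ, IndiscSeqOver (L := L) {x | ∃ i j t, i ≠ i₀ ∧ a i j t = x} (a i₀)) ∧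
    (∀ (i : ℕ) (k : Fin (s i)), ∃ j l t, j < i ∧ a j l t = b i k) ∧
    (∃ x : Fin n → M, ∀ i, (φ i).Realize (Sum.elim x (Sum.elim (a i 0) (b i)))) ∧
    (∀ i, ¬∃ x : Fin n → M, ∀ j, (φ i).Realize (Sum.elim x (Sum.elim (a i j) (b i))))

/-- There is an inp³-pattern of infinite depth in the variables `Fin n` :
parameters `b_i` may come from any other rows. -/
def Inp3PatternInf (L : Language) (M : Type*) [L.Structure M] (n : ℕ) : Prop :=
  ∃ (r s : ℕ → ℕ) (φ : ∀ i : ℕ, L.Formula (Fin n ⊕ (Fin (r i) ⊕ Fin (s i))))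
    (a : ∀ i : ℕ, ℕ → Fin (r i) → M) (b : ∀ i : ℕ, Fin (s i) → M),
    (∀ i₀ : ℕ, IndiscSeqOver (L := L) {x | ∃ i j t, i ≠ i₀ ∧ a i j t = x} (a i₀)) ∧
    (∀ (i : ℕ) (k : Fin (s i)), ∃ j l t, j ≠ i ∧ a j l t = b i k) ∧
    (∃ x : Fin n → M, ∀ i, (φ i).Realize (Sum.elim x (Sum.elim (a i 0) (b i)))) ∧
    (∀ i, ¬∃ x : Fin n → M, ∀ j, (φ i).Realize (Sum.elim x (Sum.elim (a i j) (b i))))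

/-- `T` is strong². -/
def Strong2 (L : Language) (M : Type*) [L.Structure M] : Prop :=
  ∀ n : ℕ, ¬Inp2PatternInf L M n

/-- `T` is strong³. -/
def Strong3 (L : Language) (M : Type*) [L.Structure M] : Prop :=
  ∀ n : ℕ, ¬Inp3PatternInf L M n

/-!
Every inp²-pattern is an inp³-pattern. Conversely, given an inp³-pattern, choose rows
`p₀ < p₁ < ⋯` greedily, each beyond every row used by the parameters of the rows chosen before.
Then every parameter of row `pₖ` comes either from an earlier chosen row or from a row that is
not chosen at all. Parameters of the second kind are constants taken from outside the chosen
rows, so appending them to row `pₖ` keeps the chosen rows mutually indiscernible; what remains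
is an inp²-pattern.
-/

section IndiscSeqOver

variable {ι : Type*} [LinearOrder ι] {α : Type*} {B : Set M} {a : ι → α → M}

theorem IndiscSeqOver.mono {S : Set M} (h : IndiscSeqOver (L := L) S a) (hBS : B ⊆ S) :
    IndiscSeqOver (L := L) B a :=
  fun n m φ c hc => h n m φ c fun k => hBS (hc k)

theorem IndiscSeqOver.comp_right (h : IndiscSeqOver (L := L) B a) {β : Type*} (f : β → α) :
    IndiscSeqOver (L := L) B fun j => a j ∘ f := by
  intro n m φ c hc i j hi hj
  have := h n m (φ.relabel (Sum.map (Prod.map id f) id)) c hc i j hi hj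
  rwa [Formula.realize_relabel, Formula.realize_relabel, Sum.elim_comp_map, Sum.elim_comp_map,
    Function.comp_id] at this

theorem IndiscSeqOver.realize_iff_of_finite (h : IndiscSeqOver (L := L) B a) {γ : Type*}
    [Finite γ] {n : ℕ} (φ : L.Formula ((Fin n × α) ⊕ γ)) {c : γ → M} (hc : ∀ k, c k ∈ B)
    {i j : Fin n → ι} (hi : StrictMono i) (hj : StrictMono j) :
    φ.Realize (Sum.elim (fun p => a (i p.1) p.2) c) ↔
      φ.Realize (Sum.elim (fun p => a (j p.1) p.2) c) := by
  obtain ⟨m, ⟨e⟩⟩ := Finite.exists_equiv_fin γ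
  simpa only [Formula.realize_relabel, Sum.elim_comp_map, Function.comp_id,
    Function.comp_assoc, Equiv.symm_comp_self] using
    h n m (φ.relabel (Sum.map id e)) (c ∘ e.symm) (fun k => hc _) i j hi hj

theorem IndiscSeqOver.sumElim_const (h : IndiscSeqOver (L := L) B a) {γ : Type*} [Finite γ]
    {c : γ → M} (hc : ∀ k, c k ∈ B) :
    IndiscSeqOver (L := L) B fun j => Sum.elim (a j) c := by
  intro n m φ d hd i j hi hj
  let σ : (Fin n × (α ⊕ γ)) ⊕ Fin m → (Fin n × α) ⊕ (Fin m ⊕ γ) :=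
    Sum.elim (fun q => q.2.elim (fun y => .inl (q.1, y)) (.inr ∘ .inr)) (.inr ∘ .inl)
  have hσ (i' : Fin n → ι) : Sum.elim (fun p => a (i' p.1) p.2) (Sum.elim d c) ∘ σ =
      Sum.elim (fun p => Sum.elim (a (i' p.1)) c p.2) d := by
    funext v
    rcases v with ⟨_, _ | _⟩ | _ <;> rfl
  have := h.realize_iff_of_finite (φ.relabel σ) (c := Sum.elim d c)
    (by rintro (k | k); exacts [hd k, hc k]) hi hj
  rwa [Formula.realize_relabel, Formula.realize_relabel, hσ, hσ] at this

end IndiscSeqOver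

theorem exists_strictMono_rel_imp_lt (R : ℕ → ℕ → Prop) (hfin : ∀ i, {j | R i j}.Finite)
    (hirr : ∀ i, ¬R i i) : ∃ p : ℕ → ℕ, StrictMono p ∧ ∀ k m, R (p k) (p m) → m < k := by
  choose N hN using fun i => (hfin i).bddAbove
  let g : ℕ → ℕ := fun x => max x (N x) + 1
  have hg (k : ℕ) : g^[k + 1] 0 = max (g^[k] 0) (N (g^[k] 0)) + 1 :=
    Function.iterate_succ_apply' g k 0
  have hp : StrictMono fun k => g^[k] 0 := strictMono_nat_of_lt_succ fun k => by rw [hg]; omega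
  refine ⟨fun k => g^[k] 0, hp, fun k m hR => ?_⟩
  by_contra! hkm
  rcases hkm.eq_or_lt with rfl | hkm
  · exact hirr _ hR
  · have hle : g^[m] 0 ≤ N (g^[k] 0) := hN _ hR
    have hge : g^[k + 1] 0 ≤ g^[m] 0 := hp.monotone hkm
    rw [hg] at hge
    omega

open Classical in
noncomputable def moveParams {α γ : Type*} (P : γ → Prop) :
    α ⊕ γ → (α ⊕ {t // ¬P t}) ⊕ {t // P t} :=
  Sum.elim (Sum.inl ∘ Sum.inl) fun t => if h : P t then .inr ⟨t, h⟩ else .inl (.inr ⟨t, h⟩)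

theorem sumElim_comp_moveParams {α γ X : Type*} (P : γ → Prop) (u : α → X) (c : γ → X) :
    Sum.elim (Sum.elim u (c ∘ Subtype.val)) (c ∘ Subtype.val) ∘ moveParams P = Sum.elim u c := by
  funext v
  rcases v with y | t
  · rfl
  · by_cases ht : P t <;> simp [moveParams, ht]

/-- An inp-pattern of infinite depth in which the parameters of row `i` come from rows `j` with
`R i j`; rows and parameters are tuples indexed by arbitrary types. -/
def IsInpPattern (R : ℕ → ℕ → Prop) {n : ℕ} {α γ : ℕ → Type*}
    (φ : ∀ i, L.Formula (Fin n ⊕ (α i ⊕ γ i))) (a : ∀ i, ℕ → α i → M) (b : ∀ i, γ i → M) :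
    Prop :=
  (∀ i₀, IndiscSeqOver (L := L) {x | ∃ i j t, i ≠ i₀ ∧ a i j t = x} (a i₀)) ∧
    (∀ i (k : γ i), ∃ j l t, R i j ∧ a j l t = b i k) ∧
    (∃ x : Fin n → M, ∀ i, (φ i).Realize (Sum.elim x (Sum.elim (a i 0) (b i)))) ∧
    ∀ i, ¬∃ x : Fin n → M, ∀ j, (φ i).Realize (Sum.elim x (Sum.elim (a i j) (b i)))

theorem inp2PatternInf_iff {n : ℕ} :
    Inp2PatternInf L M n ↔ ∃ (r s : ℕ → ℕ) (φ : ∀ i, L.Formula (Fin n ⊕ (Fin (r i) ⊕ Fin (s i))))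
      (a : ∀ i, ℕ → Fin (r i) → M) (b : ∀ i, Fin (s i) → M),
      IsInpPattern (fun i j => j < i) φ a b :=
  Iff.rfl

theorem inp3PatternInf_iff {n : ℕ} :
    Inp3PatternInf L M n ↔ ∃ (r s : ℕ → ℕ) (φ : ∀ i, L.Formula (Fin n ⊕ (Fin (r i) ⊕ Fin (s i))))
      (a : ∀ i, ℕ → Fin (r i) → M) (b : ∀ i, Fin (s i) → M),
      IsInpPattern (fun i j => j ≠ i) φ a b :=
  Iff.rfl

namespace IsInpPattern

variable {R : ℕ → ℕ → Prop} {n : ℕ} {α γ : ℕ → Type*} {φ : ∀ i, L.Formula (Fin n ⊕ (α i ⊕ γ i))}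
  {a : ∀ i, ℕ → α i → M} {b : ∀ i, γ i → M}

theorem mono {R' : ℕ → ℕ → Prop} (hRR' : ∀ i j, R i j → R' i j) (h : IsInpPattern R φ a b) :
    IsInpPattern R' φ a b := by
  obtain ⟨hind, hpar, hcons, hincons⟩ := h
  refine ⟨hind, fun i k => ?_, hcons, hincons⟩
  obtain ⟨j, l, t, hij, hb⟩ := hpar i k
  exact ⟨j, l, t, hRR' i j hij, hb⟩

theorem exists_fin [∀ i, Finite (α i)] [∀ i, Finite (γ i)] (h : IsInpPattern R φ a b) :
    ∃ (r s : ℕ → ℕ) (φ' : ∀ i, L.Formula (Fin n ⊕ (Fin (r i) ⊕ Fin (s i))))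
      (a' : ∀ i, ℕ → Fin (r i) → M) (b' : ∀ i, Fin (s i) → M), IsInpPattern R φ' a' b' := by
  let e i := Finite.equivFin (α i)
  let f i := Finite.equivFin (γ i)
  obtain ⟨hind, hpar, hcons, hincons⟩ := h
  have hreal (i j : ℕ) (x : Fin n → M) :
      ((φ i).relabel (Sum.map id (Sum.map (e i) (f i)))).Realize
          (Sum.elim x (Sum.elim (a i j ∘ (e i).symm) (b i ∘ (f i).symm))) ↔
        (φ i).Realize (Sum.elim x (Sum.elim (a i j) (b i))) := by
    simp only [Formula.realize_relabel, Sum.elim_comp_map, Function.comp_id,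
      Function.comp_assoc, Equiv.symm_comp_self]
  refine ⟨_, _, fun i => (φ i).relabel (Sum.map id (Sum.map (e i) (f i))),
    fun i j => a i j ∘ (e i).symm, fun i => b i ∘ (f i).symm,
    fun i₀ => ((hind i₀).comp_right _).mono ?_, fun i k => ?_, ?_, fun i => ?_⟩
  · rintro _ ⟨i, j, t, hi, rfl⟩
    exact ⟨i, j, _, hi, rfl⟩
  · obtain ⟨j, l, t, hij, hb⟩ := hpar i ((f i).symm k)
    exact ⟨j, l, e j t, hij, by simpa using hb⟩
  · obtain ⟨x, hx⟩ := hcons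
    exact ⟨x, fun i => (hreal i 0 x).2 (hx i)⟩
  · rintro ⟨x, hx⟩
    exact hincons i ⟨x, fun j => (hreal i j x).1 (hx j)⟩

theorem inp2PatternInf_of_selection [∀ i, Finite (α i)] [∀ i, Finite (γ i)]
    (h : IsInpPattern R φ a b) {src : ∀ i, γ i → ℕ} (hsrc : ∀ i t, ∃ l u, a (src i t) l u = b i t)
    {p : ℕ → ℕ} (hp : p.Injective) (hpsrc : ∀ k t m, src (p k) t = p m → m < k) :
    Inp2PatternInf L M n := by
  obtain ⟨hind, -, hcons, hincons⟩ := h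
  -- parameters of row `p k` from chosen rows stay parameters; the others join the row
  let P k (t : γ (p k)) : Prop := src (p k) t ∈ Set.range p
  let a' k j := Sum.elim (a (p k) j) (b (p k) ∘ Subtype.val (p := fun t => ¬P k t))
  let b' k := b (p k) ∘ Subtype.val (p := P k)
  have hreal (k j : ℕ) (x : Fin n → M) :
      ((φ (p k)).relabel (Sum.map id (moveParams (P k)))).Realize
          (Sum.elim x (Sum.elim (a' k j) (b' k))) ↔
        (φ (p k)).Realize (Sum.elim x (Sum.elim (a (p k) j) (b (p k)))) := by
    rw [Formula.realize_relabel, Sum.elim_comp_map, Function.comp_id, sumElim_comp_moveParams]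
  have hout k (t : γ (p k)) (ht : ¬P k t) m :
      b (p k) t ∈ {x | ∃ i j u, i ≠ p m ∧ a i j u = x} := by
    obtain ⟨l, u, hu⟩ := hsrc (p k) t
    exact ⟨_, l, u, fun hm => ht ⟨m, hm.symm⟩, hu⟩
  refine inp2PatternInf_iff.2 (exists_fin
    (φ := fun k => (φ (p k)).relabel (Sum.map id (moveParams (P k)))) (a := a') (b := b')
    ⟨fun k => ?_, fun k t => ?_, ?_, fun k => ?_⟩)
  · refine ((hind (p k)).sumElim_const fun t : {t // ¬P k t} => hout k t t.2 k).mono ?_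
    rintro _ ⟨i, j, y | t, hik, rfl⟩
    · exact ⟨p i, j, y, hp.ne hik, rfl⟩
    · exact hout i t t.2 k
  · obtain ⟨m, hm⟩ := t.2
    have hu := hsrc (p k) t
    rw [← hm] at hu
    obtain ⟨l, u, hu⟩ := hu
    exact ⟨m, l, .inl u, hpsrc k t m hm.symm, hu⟩
  · obtain ⟨x, hx⟩ := hcons
    exact ⟨x, fun k => (hreal k 0 x).2 (hx (p k))⟩
  · rintro ⟨x, hx⟩
    exact hincons (p k) ⟨x, fun j => (hreal k j x).1 (hx j)⟩

theorem inp2PatternInf [∀ i, Finite (α i)] [∀ i, Finite (γ i)]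
    (h : IsInpPattern (fun i j => j ≠ i) φ a b) : Inp2PatternInf L M n := by
  choose src l u hne hsrc using h.2.1
  obtain ⟨p, hp, hpsrc⟩ := exists_strictMono_rel_imp_lt (fun i j => ∃ t, src i t = j)
    (fun i => Set.finite_range (src i)) fun i ⟨t, ht⟩ => hne i t ht
  exact h.inp2PatternInf_of_selection (fun i t => ⟨_, _, hsrc i t⟩) hp.injective
    fun k t m hm => hpsrc k m ⟨t, hm⟩

end IsInpPattern

/-- `T` is strong² iff it is strong³. -/
theorem strong2_iff_strong3 : Strong2 L M ↔ Strong3 L M := by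
  constructor
  · intro h2 n h3
    obtain ⟨r, s, φ, a, b, h⟩ := inp3PatternInf_iff.1 h3
    exact h2 n h.inp2PatternInf
  · intro h3 n h2
    obtain ⟨r, s, φ, a, b, h⟩ := inp2PatternInf_iff.1 h2
    exact h3 n (inp3PatternInf_iff.2 ⟨r, s, φ, a, b, h.mono fun _ _ => Nat.ne_of_lt⟩)

end Paper
end
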